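/- arXiv:2401.10534 — 2 statements merged into one kernel-verified Lean document; each statement's English description precedes it below -/
import Mathlib

section
/- The trace of the Jordan product, (X,Y) ↦ tr(X∘Y), is a positive-definite symmetric bilinear form on the Albert algebra H₃(𝕆) of 3×3 Hermitian octonionic matrices. -/
noncomputable section

open Finset

abbrev O8 := Fin 8 → ℝ

def octTbl (i j : Fin 8) : ℝ × Fin 8 :=
  match i.val, j.val with
  | 0, _ => (1, j)
  | _, 0 => (1, i)
  | 1, 1 => (-1, 0)
  | 1, 2 => (1, 3)
  | 1, 3 => (-1, 2)
  | 1, 4 => (1, 5)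
  | 1, 5 => (-1, 4)
  | 1, 6 => (1, 7)
  | 1, 7 => (1, 6)
  | 2, 1 => (-1, 3)
  | 2, 2 => (-1, 0)
  | 2, 3 => (1, 1)
  | 2, 4 => (-1, 6)
  | 2, 5 => (1, 7)
  | 2, 6 => (1, 4)
  | 2, 7 => (1, 5)
  | 3, 1 => (1, 2)
  | 3, 2 => (-1, 1)
  | 3, 3 => (-1, 0)
  | 3, 4 => (-1, 7)
  | 3, 5 => (1, 6)
  | 3, 6 => (-1, 5)
  | 3, 7 => (1, 4)
  | 4, 1 => (-1, 5)
  | 4, 2 => (1, 6)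
  | 4, 3 => (1, 7)
  | 4, 4 => (-1, 0)
  | 4, 5 => (1, 1)
  | 4, 6 => (-1, 2)
  | 4, 7 => (-1, 3)
  | 5, 1 => (1, 4)
  | 5, 2 => (1, 7)
  | 5, 3 => (-1, 6)
  | 5, 4 => (-1, 1)
  | 5, 5 => (-1, 0)
  | 5, 6 => (1, 3)
  | 5, 7 => (-1, 2)
  | 6, 1 => (1, 7)
  | 6, 2 => (-1, 4)
  | 6, 3 => (1, 5)
  | 6, 4 => (1, 2)
  | 6, 5 => (-1, 3)
  | 6, 6 => (-1, 0)
  | 6, 7 => (-1, 1)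
  | 7, 1 => (-1, 6)
  | 7, 2 => (-1, 5)
  | 7, 3 => (-1, 4)
  | 7, 4 => (1, 3)
  | 7, 5 => (1, 2)
  | 7, 6 => (1, 1)
  | 7, 7 => (-1, 0)
  | _, _ => (0, 0)

def soTbl (i j : Fin 8) : ℝ × Fin 8 :=
  match i.val, j.val with
  | 0, _ => (1, j)
  | _, 0 => (1, i)
  | 1, 1 => (-1, 0)
  | 1, 2 => (1, 3)
  | 1, 3 => (-1, 2)
  | 1, 4 => (1, 5)
  | 1, 5 => (-1, 4)
  | 1, 6 => (-1, 7)
  | 1, 7 => (1, 6)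
  | 2, 1 => (-1, 3)
  | 2, 2 => (-1, 0)
  | 2, 3 => (1, 1)
  | 2, 4 => (-1, 6)
  | 2, 5 => (-1, 7)
  | 2, 6 => (1, 4)
  | 2, 7 => (1, 5)
  | 3, 1 => (1, 2)
  | 3, 2 => (-1, 1)
  | 3, 3 => (-1, 0)
  | 3, 4 => (-1, 7)
  | 3, 5 => (1, 6)
  | 3, 6 => (-1, 5)
  | 3, 7 => (1, 4)
  | 4, 1 => (-1, 5)
  | 4, 2 => (1, 6)
  | 4, 3 => (1, 7)
  | 4, 4 => (1, 0)
  | 4, 5 => (-1, 1)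
  | 4, 6 => (1, 2)
  | 4, 7 => (1, 3)
  | 5, 1 => (1, 4)
  | 5, 2 => (1, 7)
  | 5, 3 => (-1, 6)
  | 5, 4 => (1, 1)
  | 5, 5 => (1, 0)
  | 5, 6 => (-1, 3)
  | 5, 7 => (1, 2)
  | 6, 1 => (1, 7)
  | 6, 2 => (-1, 4)
  | 6, 3 => (1, 5)
  | 6, 4 => (-1, 2)
  | 6, 5 => (1, 3)
  | 6, 6 => (1, 0)
  | 6, 7 => (1, 1)
  | 7, 1 => (-1, 6)
  | 7, 2 => (-1, 5)
  | 7, 3 => (-1, 4)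
  | 7, 4 => (-1, 3)
  | 7, 5 => (-1, 2)
  | 7, 6 => (-1, 1)
  | 7, 7 => (1, 0)
  | _, _ => (0, 0)

def octMul (x y : O8) : O8 := fun k =>
  ∑ i : Fin 8, ∑ j : Fin 8, x i * y j * (if (octTbl i j).2 = k then (octTbl i j).1 else 0)

def soMul (x y : O8) : O8 := fun k =>
  ∑ i : Fin 8, ∑ j : Fin 8, x i * y j * (if (soTbl i j).2 = k then (soTbl i j).1 else 0)

def oe (n : Fin 8) : O8 := fun m => if m = n then 1 else 0

def oconj (x : O8) : O8 := fun k => if k = 0 then x 0 else -x k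

def onsq (x : O8) : ℝ := ∑ k : Fin 8, (x k)^2

def octUnits : Set O8 := {oe 1, oe 2, oe 3, oe 4, oe 5, oe 6, oe 7}

abbrev AM := Fin 3 → Fin 3 → O8

def mO (A B : AM) : AM := fun i j => ∑ k : Fin 3, octMul (A i k) (B k j)

def jord (A B : AM) : AM := (1/2 : ℝ) • (mO A B + mO B A)

def trA (A : AM) : ℝ := ∑ i : Fin 3, A i i 0

def idA : AM := fun i j => if i = j then oe 0 else 0

def frd (A B : AM) : AM :=
  jord A B - (1/2 : ℝ) • ((trA A) • B + (trA B) • A)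
    + ((1/2 : ℝ) * (trA A * trA B - trA (jord A B))) • idA

def herm (A : AM) : Prop := ∀ i j, A j i = oconj (A i j)

def jdet (A : AM) : ℝ :=
  A 0 0 0 * A 1 1 0 * A 2 2 0
    + 2 * (octMul (octMul (A 0 1) (A 1 2)) (A 2 0)) 0
    - A 0 0 0 * onsq (A 1 2) - A 1 1 0 * onsq (A 2 0) - A 2 2 0 * onsq (A 0 1)

abbrev T8 := Fin 8 → Fin 8 → ℝ

def tens (a x : O8) : T8 := fun s t => a s * x t

def tMul (u v : T8) : T8 := fun a b =>
  ∑ i1 : Fin 8, ∑ i2 : Fin 8, ∑ j1 : Fin 8, ∑ j2 : Fin 8,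
    u i1 j1 * v i2 j2 *
      ((if (soTbl i1 i2).2 = a then (soTbl i1 i2).1 else 0) *
       (if (octTbl j1 j2).2 = b then (octTbl j1 j2).1 else 0))

abbrev TM := Fin 3 → Fin 3 → T8

def mT (A B : TM) : TM := fun i j => ∑ k : Fin 3, tMul (A i k) (B k j)

def commT (A B : TM) : TM := mT A B - mT B A

def lab (Q : O8) (X : AM) : TM := fun i j => tens Q (X i j)

def EI (z : ℝ) (e : O8) : AM := fun i j =>
  if i = 0 ∧ j = 0 then z • oe 0
  else if i = 1 ∧ j = 1 then (-z) • oe 0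
  else if i = 0 ∧ j = 1 then e
  else if i = 1 ∧ j = 0 then oconj e
  else 0

def D112 : AM := fun i j =>
  if i = j then (if (i : ℕ) = 2 then (-2 : ℝ) • oe 0 else oe 0) else 0

/-!
The form is symmetric because `X ∘ Y` is, and bilinear because octonion multiplication is.
For positivity, Hermitian symmetry `X k i = conj (X i k)` turns the diagonal of `X X` into
`∑ₖ X i k · conj (X i k)`, whose real part is `∑ₖ |X i k|²`; hence `tr (X ∘ X)` is the squared
Euclidean norm of all `72` real coordinates of `X`.
-/

lemma octMul_add_left (x y z : O8) : octMul (x + y) z = octMul x z + octMul y z := by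
  funext k
  simp only [octMul, Pi.add_apply, add_mul, Finset.sum_add_distrib]

lemma octMul_add_right (x y z : O8) : octMul x (y + z) = octMul x y + octMul x z := by
  funext k
  simp only [octMul, Pi.add_apply, mul_add, add_mul, Finset.sum_add_distrib]

lemma octMul_smul_left (r : ℝ) (x y : O8) : octMul (r • x) y = r • octMul x y := by
  funext k
  simp only [octMul, Pi.smul_apply, smul_eq_mul, Finset.mul_sum, mul_assoc]

lemma octMul_smul_right (r : ℝ) (x y : O8) : octMul x (r • y) = r • octMul x y := by
  funext k
  simp only [octMul, Pi.smul_apply, smul_eq_mul, Finset.mul_sum]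
  exact Finset.sum_congr rfl fun _ _ => Finset.sum_congr rfl fun _ _ => by ring

lemma octMul_oconj_self_re (x : O8) : octMul x (oconj x) 0 = onsq x := by
  simp only [octMul, oconj, onsq, Fin.sum_univ_eight]
  norm_num [octTbl, Fin.ext_iff]
  ring

lemma onsq_nonneg (x : O8) : 0 ≤ onsq x :=
  Finset.sum_nonneg fun _ _ => sq_nonneg _

lemma onsq_pos {x : O8} (hx : x ≠ 0) : 0 < onsq x := by
  obtain ⟨k, hk⟩ := Function.ne_iff.mp hx
  exact Finset.sum_pos' (fun _ _ => sq_nonneg _) ⟨k, Finset.mem_univ k, sq_pos_of_ne_zero hk⟩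

lemma mO_add_left (A B C : AM) : mO (A + B) C = mO A C + mO B C := by
  funext i j
  simp only [mO, Pi.add_apply, octMul_add_left, Finset.sum_add_distrib]

lemma mO_add_right (A B C : AM) : mO A (B + C) = mO A B + mO A C := by
  funext i j
  simp only [mO, Pi.add_apply, octMul_add_right, Finset.sum_add_distrib]

lemma mO_smul_left (r : ℝ) (A B : AM) : mO (r • A) B = r • mO A B := by
  funext i j
  simp only [mO, Pi.smul_apply, octMul_smul_left, ← Finset.smul_sum]

lemma mO_smul_right (r : ℝ) (A B : AM) : mO A (r • B) = r • mO A B := by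
  funext i j
  simp only [mO, Pi.smul_apply, octMul_smul_right, ← Finset.smul_sum]

lemma jord_comm (A B : AM) : jord A B = jord B A := by
  rw [jord, jord, add_comm]

lemma jord_add_left (A A' B : AM) : jord (A + A') B = jord A B + jord A' B := by
  simp only [jord, mO_add_left, mO_add_right, ← smul_add]
  abel_nf

lemma jord_smul_left (r : ℝ) (A B : AM) : jord (r • A) B = r • jord A B := by
  rw [jord, jord, mO_smul_left, mO_smul_right, ← smul_add, smul_comm]

lemma trA_add (A B : AM) : trA (A + B) = trA A + trA B := by
  simp only [trA, Pi.add_apply, Finset.sum_add_distrib]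

lemma trA_smul (r : ℝ) (A : AM) : trA (r • A) = r * trA A := by
  simp only [trA, Pi.smul_apply, smul_eq_mul, Finset.mul_sum]

lemma trA_jord_self_of_herm {A : AM} (hA : herm A) :
    trA (jord A A) = ∑ i : Fin 3, ∑ k : Fin 3, onsq (A i k) := by
  have hdiag (i : Fin 3) : mO A A i i 0 = ∑ k : Fin 3, onsq (A i k) := by
    simp only [mO, Finset.sum_apply, hA i, octMul_oconj_self_re]
  simp only [trA, jord, Pi.smul_apply, Pi.add_apply, smul_eq_mul, hdiag]
  exact Finset.sum_congr rfl fun _ _ => by ring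

lemma trA_jord_self_pos {A : AM} (hA : herm A) (hA0 : A ≠ 0) : 0 < trA (jord A A) := by
  obtain ⟨i, hi⟩ := Function.ne_iff.mp hA0
  obtain ⟨k, hk⟩ := Function.ne_iff.mp hi
  rw [trA_jord_self_of_herm hA]
  exact Finset.sum_pos' (fun _ _ => Finset.sum_nonneg fun _ _ => onsq_nonneg _)
    ⟨i, Finset.mem_univ i,
      Finset.sum_pos' (fun _ _ => onsq_nonneg _) ⟨k, Finset.mem_univ k, onsq_pos hk⟩⟩

theorem stmt11 :
    (∀ X Y : AM, herm X → herm Y → trA (jord X Y) = trA (jord Y X)) ∧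
    (∀ X X' Y : AM, trA (jord (X + X') Y) = trA (jord X Y) + trA (jord X' Y)) ∧
    (∀ (r : ℝ) (X Y : AM), trA (jord (r • X) Y) = r * trA (jord X Y)) ∧
    (∀ X : AM, herm X → X ≠ 0 → 0 < trA (jord X X)) :=
  ⟨fun X Y _ _ => by rw [jord_comm],
    fun X X' Y => by rw [jord_add_left, trA_add],
    fun r X Y => by rw [jord_smul_left, trA_smul],
    fun _ hX hX0 => trA_jord_self_pos hX hX0⟩
end
end

section
/- For anticommuting imaginary split-octonion units Q₁, Q₂ (Q₂Q₁ = −Q₁Q₂) and orthogonal tracefree elements X₀, Y₀ of H₃(𝕆) with tr(X₀∘Y₀) = 0, the commutator of the Kronecker-type products satisfies [Q₁⊗X₀, Q₂⊗Y₀] = 2 Q₁Q₂ ⊗ (X₀∘Y₀) = 2 Q₁Q₂ ⊗ (X₀*Y₀), where [a⊗M, b⊗N] is computed in the algebra of 3×3 matrices over 𝕆'⊗𝕆 via ordinary matrix commutator. -/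
noncomputable section

open Finset

/-
Since `lab Q X` is entrywise the pure tensor `Q ⊗ Xᵢⱼ` and the product on `𝕆' ⊗ 𝕆` is the tensor
product of the two products, `(P X)(Q Y) = (PQ)(XY)`. Anticommutation of `Q₁, Q₂` turns the
commutator into `Q₁Q₂ (XY + YX) = 2 Q₁Q₂ (X ∘ Y)`; the Freudenthal product of tracefree,
trace-orthogonal matrices has all its correction terms vanish.
-/

lemma tMul_tens (a x b y : O8) :
    tMul (tens a x) (tens b y) = tens (soMul a b) (octMul x y) := by
  funext s t
  simp only [tMul, tens, soMul, octMul]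
  rw [Finset.sum_mul_sum]
  refine Finset.sum_congr rfl fun i1 _ => ?_
  conv_lhs => rw [Finset.sum_comm]
  refine Finset.sum_congr rfl fun j1 _ => ?_
  rw [Finset.sum_mul_sum]
  refine Finset.sum_congr rfl fun i2 _ => Finset.sum_congr rfl fun j2 _ => ?_
  ring

lemma tens_sum_right (a : O8) (x : Fin 3 → O8) : tens a (∑ k, x k) = ∑ k, tens a (x k) := by
  funext s t
  simp only [tens, Finset.sum_apply, Finset.mul_sum]

lemma mT_lab (P Q : O8) (X Y : AM) : mT (lab P X) (lab Q Y) = lab (soMul P Q) (mO X Y) := by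
  funext i j
  simp only [mT, lab, mO, tMul_tens, tens_sum_right]

lemma lab_add (Q : O8) (X Y : AM) : lab Q (X + Y) = lab Q X + lab Q Y := by
  funext i j s t
  simp only [lab, tens, Pi.add_apply, mul_add]

lemma lab_neg_left (Q : O8) (X : AM) : lab (-Q) X = -lab Q X := by
  funext i j s t
  simp only [lab, tens, Pi.neg_apply, neg_mul]

lemma lab_smul_right (Q : O8) (c : ℝ) (X : AM) : lab Q (c • X) = c • lab Q X := by
  funext i j s t
  simp only [lab, tens, Pi.smul_apply, smul_eq_mul]
  ring

lemma commT_lab_of_anticomm {P Q : O8} (hanti : soMul Q P = -soMul P Q) (X Y : AM) :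
    commT (lab P X) (lab Q Y) = (2 : ℝ) • lab (soMul P Q) (jord X Y) := by
  rw [commT, mT_lab, mT_lab, hanti, lab_neg_left, sub_neg_eq_add, ← lab_add, jord,
    lab_smul_right, smul_smul]
  norm_num

lemma frd_eq_jord_of_trA_eq_zero {A B : AM} (hA : trA A = 0) (hB : trA B = 0)
    (hAB : trA (jord A B) = 0) : frd A B = jord A B := by
  simp [frd, hA, hB, hAB]

theorem stmt15_general (Q1 Q2 : O8)
    (hanti : soMul Q2 Q1 = - soMul Q1 Q2)
    (X0 Y0 : AM)
    (h0X : trA X0 = 0) (h0Y : trA Y0 = 0) (horth : trA (jord X0 Y0) = 0) :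
    commT (lab Q1 X0) (lab Q2 Y0) = (2 : ℝ) • lab (soMul Q1 Q2) (jord X0 Y0) ∧
    jord X0 Y0 = frd X0 Y0 :=
  ⟨commT_lab_of_anticomm hanti X0 Y0, (frd_eq_jord_of_trA_eq_zero h0X h0Y horth).symm⟩

theorem stmt15 (Q1 Q2 : O8) (h1 : Q1 0 = 0) (h2 : Q2 0 = 0)
    (hanti : soMul Q2 Q1 = - soMul Q1 Q2)
    (X0 Y0 : AM) (hX : herm X0) (hY : herm Y0)
    (h0X : trA X0 = 0) (h0Y : trA Y0 = 0) (horth : trA (jord X0 Y0) = 0) :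
    commT (lab Q1 X0) (lab Q2 Y0) = (2 : ℝ) • lab (soMul Q1 Q2) (jord X0 Y0) ∧
    jord X0 Y0 = frd X0 Y0 :=
  stmt15_general Q1 Q2 hanti X0 Y0 h0X h0Y horth
end
end
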